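/- arXiv:1801.05696 — 2 statements merged into one kernel-verified Lean document; each statement's English description precedes it below -/
import Mathlib

section
/- Let f ∈ H¹(a,b) (absolutely continuous with square-integrable derivative) with f(a)=0 or f(b)=0, let α ∈ ℝ, and let W be a positive semidefinite n×n real matrix. Then ∫_a^b e^{2αt} f(t)ᵀ W f(t) dt ≤ e^{2|α|(b−a)} · (4(b−a)²/π²) · ∫_a^b e^{2αt} f'(t)ᵀ W f'(t) dt. -/
/-! Write `q x = x ⬝ᵥ W *ᵥ x`. If `φ` solves the Riccati equation `φ' = -(k² + φ²)`, completing
the square gives `(φ · q ∘ f)' ≤ q ∘ f' - k² · q ∘ f`, so `k² ∫ q ∘ f ≤ ∫ q ∘ f'` as soon as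
`φ · q ∘ f` takes equal values at `a` and `b`. The solution `φ t = k tan (k (c - t))`, with `c` the
endpoint where `f` need not vanish, is regular on `[a, b]` for `k < π / (2 (b - a))`; letting `k`
increase to that bound gives Wirtinger's constant. Finally, the weight `exp (2 α t)` varies on
`[a, b]` by at most the factor `exp (2 |α| (b - a))`. -/

open MeasureTheory Real Set Matrix Filter Topology intervalIntegral

section Calculus

variable {𝕜 ι : Type*} [NontriviallyNormedField 𝕜] [Fintype ι] {f g : 𝕜 → ι → 𝕜} {f' g' : ι → 𝕜}
  {t : 𝕜}

theorem HasDerivAt.dotProduct (hf : HasDerivAt f f' t) (hg : HasDerivAt g g' t) :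
    HasDerivAt (fun s => f s ⬝ᵥ g s) (f' ⬝ᵥ g t + f t ⬝ᵥ g') t := by
  unfold _root_.dotProduct
  rw [← Finset.sum_add_distrib]
  exact HasDerivAt.fun_sum fun i _ => (hasDerivAt_pi.1 hf i).mul (hasDerivAt_pi.1 hg i)

theorem HasDerivAt.mulVec (A : Matrix ι ι 𝕜) (hf : HasDerivAt f f' t) :
    HasDerivAt (fun s => A *ᵥ f s) (A *ᵥ f') t :=
  hasDerivAt_pi.2 fun i => HasDerivAt.fun_sum fun j _ => (hasDerivAt_pi.1 hf j).const_mul (A i j)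

end Calculus

theorem Matrix.IsSymm.dotProduct_mulVec_comm {ι R : Type*} [Fintype ι] [CommSemiring R]
    {A : Matrix ι ι R} (hA : A.IsSymm) (x y : ι → R) : x ⬝ᵥ A *ᵥ y = y ⬝ᵥ A *ᵥ x := by
  rw [dotProduct_mulVec, ← mulVec_transpose, hA.eq, dotProduct_comm]

theorem hasDerivAt_mul_tan_sub {k c t : ℝ} (h : cos (k * (c - t)) ≠ 0) :
    HasDerivAt (fun s => k * tan (k * (c - s))) (-(k ^ 2 + (k * tan (k * (c - t))) ^ 2)) t := by
  have hlin : HasDerivAt (fun s => k * (c - s)) (-k) t := by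
    simpa using ((hasDerivAt_id t).const_sub c).const_mul k
  refine (((hasDerivAt_tan h).comp t hlin).const_mul k).congr_deriv ?_
  rw [one_div, ← inv_one_add_tan_sq h, inv_inv]
  ring

theorem cos_mul_sub_pos {a b k c t : ℝ} (hk : 0 ≤ k) (hkπ : k * (b - a) < π / 2)
    (hc : c ∈ Icc a b) (ht : t ∈ Icc a b) : 0 < cos (k * (c - t)) := by
  have hct : |c - t| ≤ b - a := abs_sub_le_of_le_of_le hc.1 hc.2 ht.1 ht.2
  refine cos_pos_of_mem_Ioo (abs_lt.1 ?_)
  calc |k * (c - t)| = k * |c - t| := by rw [abs_mul, abs_of_nonneg hk]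
    _ ≤ k * (b - a) := mul_le_mul_of_nonneg_left hct hk
    _ < π / 2 := hkπ

section QuadraticForm

variable {ι : Type*} [Fintype ι] {W : Matrix ι ι ℝ}

theorem Matrix.PosSemidef.dotProduct_mulVec_self_nonneg (hW : W.PosSemidef) (x : ι → ℝ) :
    0 ≤ x ⬝ᵥ W *ᵥ x := by
  simpa using hW.dotProduct_mulVec_nonneg x

theorem Matrix.PosSemidef.two_mul_mul_dotProduct_mulVec_le (hW : W.PosSemidef) (c : ℝ)
    (x y : ι → ℝ) :
    2 * c * (y ⬝ᵥ W *ᵥ x) ≤ y ⬝ᵥ W *ᵥ y + c ^ 2 * (x ⬝ᵥ W *ᵥ x) := by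
  have hsq := hW.dotProduct_mulVec_self_nonneg (y - c • x)
  have hsymm := (isHermitian_iff_isSymm.1 hW.isHermitian).dotProduct_mulVec_comm x y
  simp only [mulVec_sub, mulVec_smul, dotProduct_sub, sub_dotProduct, dotProduct_smul,
    smul_dotProduct, smul_eq_mul, hsymm] at hsq
  nlinarith

theorem HasDerivAt.dotProduct_mulVec_self {f : ℝ → ι → ℝ} {f' : ι → ℝ} {t : ℝ}
    (hW : W.IsSymm) (hf : HasDerivAt f f' t) :
    HasDerivAt (fun s => f s ⬝ᵥ W *ᵥ f s) (2 * (f' ⬝ᵥ W *ᵥ f t)) t := by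
  refine (hf.dotProduct (hf.mulVec W)).congr_deriv ?_
  rw [hW.dotProduct_mulVec_comm (f t)]
  ring

theorem integral_dotProduct_mulVec_le_of_riccati {a b k : ℝ} (hab : a ≤ b) (hW : W.PosSemidef)
    {f f' : ℝ → ι → ℝ} {φ : ℝ → ℝ} (hf : ∀ t ∈ Icc a b, HasDerivAt f (f' t) t)
    (hφ : ∀ t ∈ Icc a b, HasDerivAt φ (-(k ^ 2 + φ t ^ 2)) t)
    (hf'W : IntervalIntegrable (fun t => f' t ⬝ᵥ W *ᵥ f' t) volume a b)
    (hbd : φ a * (f a ⬝ᵥ W *ᵥ f a) = φ b * (f b ⬝ᵥ W *ᵥ f b)) :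
    k ^ 2 * ∫ t in a..b, f t ⬝ᵥ W *ᵥ f t ≤ ∫ t in a..b, f' t ⬝ᵥ W *ᵥ f' t := by
  have hqf : ∀ t ∈ Icc a b,
      HasDerivAt (fun s => f s ⬝ᵥ W *ᵥ f s) (2 * (f' t ⬝ᵥ W *ᵥ f t)) t := fun t ht =>
    (hf t ht).dotProduct_mulVec_self (isHermitian_iff_isSymm.1 hW.isHermitian)
  have hfW : IntervalIntegrable (fun t => f t ⬝ᵥ W *ᵥ f t) volume a b :=
    (HasDerivAt.continuousOn hqf).intervalIntegrable_of_Icc hab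
  have hF : ∀ t ∈ Icc a b, HasDerivAt (fun s => φ s * (f s ⬝ᵥ W *ᵥ f s))
      (-(k ^ 2 + φ t ^ 2) * (f t ⬝ᵥ W *ᵥ f t) + φ t * (2 * (f' t ⬝ᵥ W *ᵥ f t))) t :=
    fun t ht => (hφ t ht).mul (hqf t ht)
  have key := sub_le_integral_of_hasDeriv_right_of_le hab
    (fun t ht => (hF t ht).continuousAt.continuousWithinAt)
    (fun t ht => (hF t (Ioo_subset_Icc_self ht)).hasDerivWithinAt)
    ((intervalIntegrable_iff_integrableOn_Icc_of_le hab).1 (hf'W.sub (hfW.const_mul (k ^ 2))))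
    (fun t _ => by nlinarith [hW.two_mul_mul_dotProduct_mulVec_le (φ t) (f t) (f' t)])
  rw [integral_sub hf'W (hfW.const_mul _),
    intervalIntegral.integral_const_mul, hbd, sub_self] at key
  linarith

theorem sq_mul_integral_dotProduct_mulVec_le {a b k : ℝ} (hab : a ≤ b) (hk : 0 ≤ k)
    (hkπ : k * (b - a) < π / 2) (hW : W.PosSemidef) {f f' : ℝ → ι → ℝ}
    (hf : ∀ t ∈ Icc a b, HasDerivAt f (f' t) t)
    (hf'W : IntervalIntegrable (fun t => f' t ⬝ᵥ W *ᵥ f' t) volume a b)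
    (hbc : f a = 0 ∨ f b = 0) :
    k ^ 2 * ∫ t in a..b, f t ⬝ᵥ W *ᵥ f t ≤ ∫ t in a..b, f' t ⬝ᵥ W *ᵥ f' t := by
  have hφ : ∀ c ∈ Icc a b, ∀ t ∈ Icc a b, HasDerivAt (fun s => k * tan (k * (c - s)))
      (-(k ^ 2 + (k * tan (k * (c - t))) ^ 2)) t := fun c hc t ht =>
    hasDerivAt_mul_tan_sub (cos_mul_sub_pos hk hkπ hc ht).ne'
  rcases hbc with ha | hb
  · exact integral_dotProduct_mulVec_le_of_riccati hab hW hf (hφ b (right_mem_Icc.2 hab)) hf'W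
      (by simp [ha])
  · exact integral_dotProduct_mulVec_le_of_riccati hab hW hf (hφ a (left_mem_Icc.2 hab)) hf'W
      (by simp [hb])

theorem pi_div_sq_mul_integral_dotProduct_mulVec_le {a b : ℝ} (hab : a < b) (hW : W.PosSemidef)
    {f f' : ℝ → ι → ℝ} (hf : ∀ t ∈ Icc a b, HasDerivAt f (f' t) t)
    (hf'W : IntervalIntegrable (fun t => f' t ⬝ᵥ W *ᵥ f' t) volume a b)
    (hbc : f a = 0 ∨ f b = 0) :
    (π / (2 * (b - a))) ^ 2 * ∫ t in a..b, f t ⬝ᵥ W *ᵥ f t ≤ ∫ t in a..b, f' t ⬝ᵥ W *ᵥ f' t := by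
  have hba : 0 < b - a := sub_pos.2 hab
  have hK : 0 < π / (2 * (b - a)) := by positivity
  have hlim : Tendsto (fun k => k ^ 2 * ∫ t in a..b, f t ⬝ᵥ W *ᵥ f t) (𝓝[<] (π / (2 * (b - a))))
      (𝓝 ((π / (2 * (b - a))) ^ 2 * ∫ t in a..b, f t ⬝ᵥ W *ᵥ f t)) :=
    (Continuous.tendsto (by fun_prop) _).mono_left nhdsWithin_le_nhds
  refine le_of_tendsto hlim ?_
  filter_upwards [Ioo_mem_nhdsLT hK] with k hk
  refine sq_mul_integral_dotProduct_mulVec_le hab.le hk.1.le ?_ hW hf hf'W hbc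
  calc k * (b - a) < π / (2 * (b - a)) * (b - a) := mul_lt_mul_of_pos_right hk.2 hba
    _ = π / 2 := by field_simp

theorem integral_dotProduct_mulVec_le {a b : ℝ} (hab : a < b) (hW : W.PosSemidef)
    {f f' : ℝ → ι → ℝ} (hf : ∀ t ∈ Icc a b, HasDerivAt f (f' t) t)
    (hf'W : IntervalIntegrable (fun t => f' t ⬝ᵥ W *ᵥ f' t) volume a b)
    (hbc : f a = 0 ∨ f b = 0) :
    ∫ t in a..b, f t ⬝ᵥ W *ᵥ f t ≤
      4 * (b - a) ^ 2 / π ^ 2 * ∫ t in a..b, f' t ⬝ᵥ W *ᵥ f' t := by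
  have hK : 0 < (π / (2 * (b - a))) ^ 2 := by have := sub_pos.2 hab; positivity
  have hconst : 4 * (b - a) ^ 2 / π ^ 2 = ((π / (2 * (b - a))) ^ 2)⁻¹ := by
    field_simp
    ring
  rw [hconst, inv_mul_eq_div, le_div_iff₀' hK]
  exact pi_div_sq_mul_integral_dotProduct_mulVec_le hab hW hf hf'W hbc

end QuadraticForm

theorem abs_two_mul_mul_sub_mul_add_le {a b t : ℝ} (α : ℝ) (ht : t ∈ Icc a b) :
    |2 * α * t - α * (a + b)| ≤ |α| * (b - a) := by
  rw [show 2 * α * t - α * (a + b) = α * (2 * t - a - b) by ring, abs_mul]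
  exact mul_le_mul_of_nonneg_left (abs_le.2 ⟨by linarith [ht.1], by linarith [ht.2]⟩)
    (abs_nonneg α)

theorem exp_wirtinger_vector_general {n : ℕ} (a b α : ℝ) (hab : a < b)
    (f f' : ℝ → Fin n → ℝ) (W : Matrix (Fin n) (Fin n) ℝ)
    (hW : W.PosSemidef)
    (hderiv : ∀ t ∈ Set.Icc a b, HasDerivAt f (f' t) t)
    (hf' : IntervalIntegrable (fun t => Real.exp (2 * α * t) * (f' t ⬝ᵥ W *ᵥ f' t))
      volume a b)
    (hbc : f a = 0 ∨ f b = 0) :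
    ∫ t in a..b, Real.exp (2 * α * t) * (f t ⬝ᵥ W *ᵥ f t) ≤
      Real.exp (2 * |α| * (b - a)) * (4 * (b - a) ^ 2 / Real.pi ^ 2) *
        ∫ t in a..b, Real.exp (2 * α * t) * (f' t ⬝ᵥ W *ᵥ f' t) := by
  set E := exp (2 * |α| * (b - a))
  set m := exp (α * (a + b) - |α| * (b - a))
  have hweight : ∀ t ∈ Icc a b, m ≤ exp (2 * α * t) ∧ exp (2 * α * t) ≤ E * m := fun t ht => by
    obtain ⟨hlo, hhi⟩ := abs_le.1 (abs_two_mul_mul_sub_mul_add_le α ht)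
    rw [← exp_add]
    exact ⟨exp_le_exp.2 (by linarith), exp_le_exp.2 (by linarith)⟩
  have hq : ContinuousOn (fun t => f t ⬝ᵥ W *ᵥ f t) (Icc a b) :=
    (by fun_prop : Continuous fun x : Fin n → ℝ => x ⬝ᵥ W *ᵥ x).comp_continuousOn
      (HasDerivAt.continuousOn hderiv)
  have hq' : IntervalIntegrable (fun t => f' t ⬝ᵥ W *ᵥ f' t) volume a b := by
    refine (hf'.mul_continuousOn (g := fun t => exp (-(2 * α * t))) (by fun_prop)).congr ?_
    intro t _
    dsimp only
    rw [mul_right_comm, ← exp_add, add_neg_cancel, exp_zero, one_mul]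
  calc ∫ t in a..b, exp (2 * α * t) * (f t ⬝ᵥ W *ᵥ f t)
      ≤ ∫ t in a..b, E * m * (f t ⬝ᵥ W *ᵥ f t) :=
        integral_mono_on hab.le
          ((continuous_exp.comp (continuous_const_mul _)).continuousOn.mul hq
            |>.intervalIntegrable_of_Icc hab.le)
          ((hq.intervalIntegrable_of_Icc hab.le).const_mul (E * m)) fun t ht =>
          mul_le_mul_of_nonneg_right (hweight t ht).2 (hW.dotProduct_mulVec_self_nonneg _)
    _ = E * m * ∫ t in a..b, f t ⬝ᵥ W *ᵥ f t := intervalIntegral.integral_const_mul _ _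
    _ ≤ E * m * (4 * (b - a) ^ 2 / π ^ 2 * ∫ t in a..b, f' t ⬝ᵥ W *ᵥ f' t) := by
        gcongr
        exact integral_dotProduct_mulVec_le hab hW hderiv hq' hbc
    _ = E * (4 * (b - a) ^ 2 / π ^ 2) * ∫ t in a..b, m * (f' t ⬝ᵥ W *ᵥ f' t) := by
        rw [intervalIntegral.integral_const_mul]; ring
    _ ≤ E * (4 * (b - a) ^ 2 / π ^ 2) * ∫ t in a..b, exp (2 * α * t) * (f' t ⬝ᵥ W *ᵥ f' t) := by
        gcongr
        exact integral_mono_on hab.le (hq'.const_mul m) hf' fun t ht =>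
          mul_le_mul_of_nonneg_right (hweight t ht).1 (hW.dotProduct_mulVec_self_nonneg _)

/-- Exponential Wirtinger inequality (vector case). -/
theorem exp_wirtinger_vector {n : ℕ} (a b α : ℝ) (hab : a < b)
    (f f' : ℝ → Fin n → ℝ) (W : Matrix (Fin n) (Fin n) ℝ)
    (hW : W.PosSemidef)
    (hderiv : ∀ t ∈ Set.Icc a b, HasDerivAt f (f' t) t)
    (hf' : IntervalIntegrable (fun t => Real.exp (2 * α * t) * (f' t ⬝ᵥ W *ᵥ f' t))
      volume a b)
    (hf : IntervalIntegrable (fun t => Real.exp (2 * α * t) * (f t ⬝ᵥ W *ᵥ f t))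
      volume a b)
    (hbc : f a = 0 ∨ f b = 0) :
    ∫ t in a..b, Real.exp (2 * α * t) * (f t ⬝ᵥ W *ᵥ f t) ≤
      Real.exp (2 * |α| * (b - a)) * (4 * (b - a) ^ 2 / Real.pi ^ 2) *
        ∫ t in a..b, Real.exp (2 * α * t) * (f' t ⬝ᵥ W *ᵥ f' t) :=
  exp_wirtinger_vector_general a b α hab f f' W hW hderiv hf' hbc
end

section
/- Consider the scalar special case of Wirtinger's exponential inequality: if f : [a,b] → ℝ is continuously differentiable with f(a) = 0, then for any α ∈ ℝ, ∫_a^b e^{2αt} f(t)² dt ≤ e^{2|α|(b−a)} (4(b−a)²/π²) ∫_a^b e^{2αt} f'(t)² dt. -/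
open Real Set intervalIntegral Filter

/-!
If `g' = -(ω² + g²)` on `[a, b]`, then `(f² g)' + ω² f² = f'² - (f' - f g)² ≤ f'²`, so integrating gives
`ω² ∫ f² ≤ ∫ f'²` as soon as the boundary term `[f² g]ₐᵇ` is nonnegative. The Riccati solution
`g t = ω tan (ω (b - t))` is regular on `[a, b]` for `ω < π / (2 (b - a))` and vanishes at `b`, while
`f a = 0` kills the other boundary term; letting `ω` tend to `π / (2 (b - a))` gives Wirtinger's
inequality `∫ f² ≤ 4 (b - a)² / π² ∫ f'²`. The weight `exp (2 α t)` varies on `[a, b]` by a factor of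
at most `exp (2 |α| (b - a))`, so comparing it with its minimum on both sides gives the weighted version.
-/

theorem mul_integral_sq_le_integral_deriv_sq_of_riccati {a b ω : ℝ} (hab : a ≤ b)
    {f f' g : ℝ → ℝ} (hf : ∀ t ∈ Icc a b, HasDerivAt f (f' t) t)
    (hf' : ContinuousOn f' (Icc a b))
    (hg : ∀ t ∈ Icc a b, HasDerivAt g (-(ω ^ 2 + g t ^ 2)) t)
    (hbdry : f a ^ 2 * g a ≤ f b ^ 2 * g b) :
    ω ^ 2 * ∫ t in a..b, f t ^ 2 ≤ ∫ t in a..b, f' t ^ 2 := by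
  have hfc : ContinuousOn f (Icc a b) := fun t ht => (hf t ht).continuousAt.continuousWithinAt
  have hgc : ContinuousOn g (Icc a b) := fun t ht => (hg t ht).continuousAt.continuousWithinAt
  set D : ℝ → ℝ := fun t => 2 * f t * f' t * g t - f t ^ 2 * (ω ^ 2 + g t ^ 2)
  have hD : ∀ t ∈ uIcc a b, HasDerivAt (fun t => f t ^ 2 * g t) (D t) t := by
    intro t ht
    rw [uIcc_of_le hab] at ht
    refine (((hf t ht).fun_pow 2).mul (hg t ht)).congr_deriv ?_
    simp only [D]
    ring
  have hDc : ContinuousOn D (Icc a b) :=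
    ((continuousOn_const.mul hfc).mul hf' |>.mul hgc).sub
      ((hfc.pow 2).mul (continuousOn_const.add (hgc.pow 2)))
  have hDint : ∫ t in a..b, D t = f b ^ 2 * g b - f a ^ 2 * g a :=
    integral_eq_sub_of_hasDerivAt hD (hDc.intervalIntegrable_of_Icc hab)
  have hpt : ∀ t ∈ Icc a b, ω ^ 2 * f t ^ 2 + D t ≤ f' t ^ 2 := fun t _ => by
    nlinarith [sq_nonneg (f' t - f t * g t)]
  calc ω ^ 2 * ∫ t in a..b, f t ^ 2
      ≤ ω ^ 2 * (∫ t in a..b, f t ^ 2) + ∫ t in a..b, D t := by linarith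
    _ = ∫ t in a..b, (ω ^ 2 * f t ^ 2 + D t) := by
      rw [integral_add, integral_const_mul]
      · exact ((hfc.pow 2).intervalIntegrable_of_Icc hab).const_mul _
      · exact hDc.intervalIntegrable_of_Icc hab
    _ ≤ ∫ t in a..b, f' t ^ 2 :=
      integral_mono_on hab
        (((continuousOn_const.mul (hfc.pow 2)).add hDc).intervalIntegrable_of_Icc hab)
        ((hf'.pow 2).intervalIntegrable_of_Icc hab) hpt

theorem hasDerivAt_mul_tan_mul_sub {ω c t : ℝ} (h : cos (ω * (c - t)) ≠ 0) :
    HasDerivAt (fun t => ω * tan (ω * (c - t))) (-(ω ^ 2 + (ω * tan (ω * (c - t))) ^ 2)) t := by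
  have hin : HasDerivAt (fun t => ω * (c - t)) (-ω) t := by
    simpa using ((hasDerivAt_id t).const_sub c).const_mul ω
  refine (((hasDerivAt_tan h).comp t hin).const_mul ω).congr_deriv ?_
  rw [tan_eq_sin_div_cos]
  field_simp
  linear_combination ω ^ 2 * sin_sq_add_cos_sq (ω * (c - t))

theorem integral_sq_le_of_apply_left_eq_zero {a b : ℝ} (hab : a < b) {f f' : ℝ → ℝ}
    (hf : ∀ t ∈ Icc a b, HasDerivAt f (f' t) t) (hf' : ContinuousOn f' (Icc a b))
    (ha : f a = 0) :
    ∫ t in a..b, f t ^ 2 ≤ 4 * (b - a) ^ 2 / π ^ 2 * ∫ t in a..b, f' t ^ 2 := by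
  set ω₀ := π / (2 * (b - a))
  have hω₀ : 0 < ω₀ := div_pos pi_pos (by linarith)
  have hbelow : ∀ ω ∈ Ico 0 ω₀, ω ^ 2 * ∫ t in a..b, f t ^ 2 ≤ ∫ t in a..b, f' t ^ 2 := by
    rintro ω ⟨hω0, hω⟩
    have hcos : ∀ t ∈ Icc a b, cos (ω * (b - t)) ≠ 0 := fun t ht => by
      have hlt : ω * (b - t) < π / 2 := calc
        ω * (b - t) ≤ ω * (b - a) := mul_le_mul_of_nonneg_left (by linarith [ht.1]) hω0
        _ < ω₀ * (b - a) := mul_lt_mul_of_pos_right hω (by linarith)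
        _ = π / 2 := by simp only [ω₀]; field_simp [(sub_pos.2 hab).ne']
      have hnn : 0 ≤ ω * (b - t) := mul_nonneg hω0 (by linarith [ht.2])
      exact (cos_pos_of_mem_Ioo ⟨by linarith [pi_pos], hlt⟩).ne'
    exact mul_integral_sq_le_integral_deriv_sq_of_riccati hab.le hf hf'
      (fun t ht => hasDerivAt_mul_tan_mul_sub (hcos t ht)) (by simp [ha])
  have hlim : ω₀ ^ 2 * ∫ t in a..b, f t ^ 2 ≤ ∫ t in a..b, f' t ^ 2 :=
    le_of_tendsto (((continuous_pow 2).mul continuous_const).tendsto ω₀ |>.mono_left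
      nhdsWithin_le_nhds) (eventually_of_mem (Ico_mem_nhdsLT hω₀) hbelow)
  have hC : 4 * (b - a) ^ 2 / π ^ 2 = (ω₀ ^ 2)⁻¹ := by
    simp only [ω₀]
    field_simp
    ring
  rwa [hC, le_inv_mul_iff₀ (by positivity)]

theorem integral_exp_mul_le_of_integral_le {a b β C : ℝ} (hab : a ≤ b) (hC : 0 ≤ C)
    {u v : ℝ → ℝ} (hu : ContinuousOn u (Icc a b)) (hv : ContinuousOn v (Icc a b))
    (hu0 : ∀ t ∈ Icc a b, 0 ≤ u t) (hv0 : ∀ t ∈ Icc a b, 0 ≤ v t)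
    (h : ∫ t in a..b, u t ≤ C * ∫ t in a..b, v t) :
    ∫ t in a..b, exp (β * t) * u t ≤
      exp (|β| * (b - a)) * C * ∫ t in a..b, exp (β * t) * v t := by
  have hexp : Continuous fun t => exp (β * t) := by fun_prop
  obtain ⟨s, hs, hmin⟩ :=
    isCompact_Icc.exists_isMinOn (nonempty_Icc.2 hab) hexp.continuousOn
  have hmax : ∀ t ∈ Icc a b, exp (β * t) ≤ exp (|β| * (b - a)) * exp (β * s) := by
    intro t ht
    rw [← exp_add, exp_le_exp]
    have hts : |t - s| ≤ b - a := abs_sub_le_iff.2 ⟨by linarith [ht.2, hs.1], by linarith [ht.1, hs.2]⟩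
    calc β * t = β * s + β * (t - s) := by ring
      _ ≤ β * s + |β| * |t - s| := by rw [← abs_mul]; linarith [le_abs_self (β * (t - s))]
      _ ≤ |β| * (b - a) + β * s := by nlinarith [abs_nonneg β]
  calc ∫ t in a..b, exp (β * t) * u t
      ≤ ∫ t in a..b, exp (|β| * (b - a)) * exp (β * s) * u t :=
        integral_mono_on hab ((hexp.continuousOn.mul hu).intervalIntegrable_of_Icc hab)
          ((continuousOn_const.mul hu).intervalIntegrable_of_Icc hab)
          fun t ht => mul_le_mul_of_nonneg_right (hmax t ht) (hu0 t ht)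
    _ ≤ exp (|β| * (b - a)) * exp (β * s) * (C * ∫ t in a..b, v t) := by
      rw [integral_const_mul]
      exact mul_le_mul_of_nonneg_left h (by positivity)
    _ = exp (|β| * (b - a)) * C * ∫ t in a..b, exp (β * s) * v t := by
      rw [integral_const_mul]; ring
    _ ≤ exp (|β| * (b - a)) * C * ∫ t in a..b, exp (β * t) * v t := by
      refine mul_le_mul_of_nonneg_left (integral_mono_on hab
        ((continuousOn_const.mul hv).intervalIntegrable_of_Icc hab)
        ((hexp.continuousOn.mul hv).intervalIntegrable_of_Icc hab)
        fun t ht => mul_le_mul_of_nonneg_right (hmin ht) (hv0 t ht)) (by positivity)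

/-- Scalar exponential Wirtinger inequality. -/
theorem exp_wirtinger_scalar (a b α : ℝ) (hab : a < b)
    (f f' : ℝ → ℝ)
    (hderiv : ∀ t ∈ Set.Icc a b, HasDerivAt f (f' t) t)
    (hf' : ContinuousOn f' (Set.Icc a b))
    (ha : f a = 0) :
    ∫ t in a..b, Real.exp (2 * α * t) * (f t) ^ 2 ≤
      Real.exp (2 * |α| * (b - a)) * (4 * (b - a) ^ 2 / Real.pi ^ 2) *
        ∫ t in a..b, Real.exp (2 * α * t) * (f' t) ^ 2 := by
  have hfc : ContinuousOn f (Icc a b) := fun t ht => (hderiv t ht).continuousAt.continuousWithinAt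
  have h := integral_exp_mul_le_of_integral_le (β := 2 * α) hab.le (by positivity)
    (hfc.pow 2) (hf'.pow 2) (fun t _ => sq_nonneg (f t)) (fun t _ => sq_nonneg (f' t))
    (integral_sq_le_of_apply_left_eq_zero hab hderiv hf' ha)
  rwa [abs_mul, abs_two] at h
end
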